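/- arXiv:1802.02684 — 3 statements merged into one kernel-verified Lean document; each statement's English description precedes it below -/
import Mathlib

section
/- Let p be a prime. For all integers n and k, writing n = n₀ + n'·p and k = k₀ + k'·p with n₀, k₀ ∈ {0, 1, ..., p-1}, one has C(n,k) ≡ C(n₀,k₀) · C(n',k') (mod p). (Lucas' theorem for binomial coefficients with arbitrary integer entries.) -/
/-!
For `k ≥ 0`, `C(n, k)` is the binomial polynomial `Ring.choose n k`. Lucas' congruence for it is
known for `n ≥ 0`; it extends to `n < 0` through the reflection
`C(x, K) = (-1)^K C(K - 1 - x, K)`, because `C(·, K) mod p` only depends on the residue of its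
argument when `K < p`, and `(-1)^p ≡ -1 (mod p)`. For `k < 0`, Loeb's symmetry
`C(n, k) = C(n, n - k)` turns the case `k ≤ n` into one with a nonnegative lower entry, and for
`n < k < 0` both sides vanish.
-/

/-- Loeb's generalized binomial coefficient `C : ℤ → ℤ → ℤ`. -/
def genBinom (n k : ℤ) : ℤ :=
  if 0 ≤ k ∧ k ≤ n then (n.toNat.choose k.toNat : ℤ)
  else if n < 0 ∧ 0 ≤ k then (-1) ^ k.toNat * ((k - n - 1).toNat.choose k.toNat : ℤ)
  else if k ≤ n ∧ n < 0 then
    (-1) ^ (n - k).toNat * ((-k - 1).toNat.choose (-n - 1).toNat : ℤ)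
  else 0

namespace Int

open Polynomial

theorem neg_one_pow_mul_choose_sub_one_sub (x : ℤ) (K : ℕ) :
    (-1) ^ K * Ring.choose ((K : ℤ) - 1 - x) K = Ring.choose x K := by
  conv_rhs => rw [← neg_neg x, Ring.choose_neg, Units.smul_def, coe_negOnePow_natCast]
  rw [smul_eq_mul, show -x + K - 1 = (K : ℤ) - 1 - x by ring]

theorem choose_of_nonneg {x : ℤ} (hx : 0 ≤ x) (K : ℕ) :
    Ring.choose x K = x.toNat.choose K := by
  lift x to ℕ using hx
  rw [Ring.choose_natCast, toNat_natCast]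

theorem choose_eq_zero_of_lt {x : ℤ} {K : ℕ} (hx : 0 ≤ x) (h : x < K) :
    Ring.choose x K = 0 := by
  rw [choose_of_nonneg hx, Nat.choose_eq_zero_of_lt (by omega), Nat.cast_zero]

theorem factorial_mul_choose (x : ℤ) (K : ℕ) :
    K.factorial * Ring.choose x K = (descPochhammer ℤ K).eval x := by
  rw [eval_eq_smeval, Ring.descPochhammer_eq_factorial_smul_choose, nsmul_eq_mul]

variable {p : ℕ} [hp : Fact p.Prime]

theorem choose_modEq_choose_of_modEq {K : ℕ} (hK : K < p) {x y : ℤ} (h : x ≡ y [ZMOD p]) :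
    Ring.choose x K ≡ Ring.choose y K [ZMOD p] := by
  have hcoprime : IsCoprime (p : ℤ) K.factorial := Nat.isCoprime_iff_coprime.mpr <|
    hp.out.coprime_iff_not_dvd.mpr fun hdvd => by have := hp.out.dvd_factorial.mp hdvd; omega
  refine modEq_iff_dvd.mpr (hcoprime.dvd_of_dvd_mul_left ?_)
  rw [mul_sub, factorial_mul_choose, factorial_mul_choose]
  exact h.dvd.trans (sub_dvd_eval_sub y x _)

theorem neg_one_pow_modEq_mod_mul_div (K : ℕ) :
    (-1 : ℤ) ^ K ≡ (-1) ^ (K % p) * (-1) ^ (K / p) [ZMOD p] := by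
  rw [← ZMod.intCast_eq_intCast_iff]
  push_cast
  conv_lhs => rw [← Nat.mod_add_div K p, pow_add, pow_mul, neg_one_pow_char (ZMod p) p]

theorem choose_modEq_choose_mod_mul_choose_div_of_nonneg {x : ℤ} (hx : 0 ≤ x) (K : ℕ) :
    Ring.choose x K ≡ Ring.choose (x % p) (K % p) * Ring.choose (x / p) (K / p) [ZMOD p] := by
  lift x to ℕ using hx
  rw [← natCast_emod, ← natCast_ediv]
  simp only [Ring.choose_natCast]
  exact Choose.choose_modEq_choose_mod_mul_choose_div

theorem choose_modEq_choose_mod_mul_choose_div (x : ℤ) (K : ℕ) :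
    Ring.choose x K ≡ Ring.choose (x % p) (K % p) * Ring.choose (x / p) (K / p) [ZMOD p] := by
  rcases le_or_gt 0 x with hx | hx
  · exact choose_modEq_choose_mod_mul_choose_div_of_nonneg hx K
  have hp₀ : (0 : ℤ) < p := by exact_mod_cast hp.out.pos
  have hx_digits := emod_add_mul_ediv x p
  have hx₀ := emod_nonneg x hp₀.ne'
  have hx₀_lt := emod_lt_of_pos x hp₀
  have hK_digits : (K : ℤ) = (K % p : ℕ) + p * (K / p : ℕ) := by
    exact_mod_cast (Nat.mod_add_div K p).symm
  have hK₀_lt : ((K % p : ℕ) : ℤ) < p := by exact_mod_cast Nat.mod_lt K hp.out.pos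
  have hreflect := choose_modEq_choose_mod_mul_choose_div_of_nonneg (p := p)
    (x := (K : ℤ) - 1 - x) (by omega) K
  rw [← neg_one_pow_mul_choose_sub_one_sub x K]
  -- The digits of `K - 1 - x` are those of `K` minus those of `x`, minus `1`. Without a borrow
  -- its last digit is below `K % p` and both sides vanish; with a borrow both of its digits are
  -- reflections (up to `p`) of the digits of `x`.
  rcases lt_or_ge (x % p) (K % p : ℕ) with hlt | hge
  · obtain ⟨-, hr⟩ := (Int.ediv_emod_unique hp₀ (a := (K : ℤ) - 1 - x)
      (r := (K % p : ℕ) - 1 - x % p) (q := (K / p : ℕ) - x / p)).mpr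
      ⟨by linear_combination -hK_digits - hx_digits, by omega, by omega⟩
    have hlast : Ring.choose (((K : ℤ) - 1 - x) % p) (K % p) = 0 := by
      rw [hr]
      exact choose_eq_zero_of_lt (by omega) (by omega)
    rw [choose_eq_zero_of_lt hx₀ hlt, zero_mul]
    simpa only [hlast, zero_mul, mul_zero] using hreflect.mul_left ((-1) ^ K)
  · obtain ⟨hq, hr⟩ := (Int.ediv_emod_unique hp₀ (a := (K : ℤ) - 1 - x)
      (r := (K % p : ℕ) - 1 - x % p + p) (q := (K / p : ℕ) - 1 - x / p)).mpr
      ⟨by linear_combination -hK_digits - hx_digits, by omega, by omega⟩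
    rw [hq, hr] at hreflect
    have hdigit := choose_modEq_choose_of_modEq (Nat.mod_lt K hp.out.pos)
      (add_modEq_left_iff.mpr dvd_rfl : ((K % p : ℕ) : ℤ) - 1 - x % p + p ≡ _ [ZMOD p])
    calc (-1) ^ K * Ring.choose ((K : ℤ) - 1 - x) K
        ≡ ((-1) ^ (K % p) * (-1) ^ (K / p)) * (Ring.choose ((K % p : ℕ) - 1 - x % p + p) (K % p)
            * Ring.choose ((K / p : ℕ) - 1 - x / p) (K / p)) [ZMOD p] :=
          (neg_one_pow_modEq_mod_mul_div K).mul hreflect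
      _ ≡ ((-1) ^ (K % p) * (-1) ^ (K / p)) * (Ring.choose ((K % p : ℕ) - 1 - x % p) (K % p)
            * Ring.choose ((K / p : ℕ) - 1 - x / p) (K / p)) [ZMOD p] :=
          (hdigit.mul_right _).mul_left _
      _ = Ring.choose (x % p) (K % p) * Ring.choose (x / p) (K / p) := by
          rw [← neg_one_pow_mul_choose_sub_one_sub (x % p),
            ← neg_one_pow_mul_choose_sub_one_sub (x / p)]
          ring

end Int

theorem genBinom_natCast (n : ℤ) (K : ℕ) : genBinom n K = Ring.choose n K := by
  unfold genBinom
  simp only [Int.toNat_natCast]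
  split_ifs
  · rw [Int.choose_of_nonneg (by omega)]
  · rw [← Int.neg_one_pow_mul_choose_sub_one_sub n K, Int.choose_of_nonneg (by omega),
      show (K : ℤ) - 1 - n = K - n - 1 by ring]
  · omega
  · rw [Int.choose_eq_zero_of_lt (by omega) (by omega)]

theorem genBinom_eq_zero_of_lt {n k : ℤ} (hnk : n < k) (h : 0 ≤ n ∨ k < 0) :
    genBinom n k = 0 := by
  rw [genBinom, if_neg (by omega), if_neg (by omega), if_neg (by omega)]

theorem genBinom_sub_of_nonneg (n : ℤ) {k : ℤ} (hk : 0 ≤ k) :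
    genBinom n (n - k) = genBinom n k := by
  rcases le_or_gt 0 n with hn | hn
  · rcases le_or_gt k n with hkn | hnk
    · rw [genBinom, genBinom, if_pos ⟨by omega, by omega⟩, if_pos ⟨hk, hkn⟩,
        Nat.choose_symm_of_eq_add (a := (n - k).toNat) (b := k.toNat) (by omega)]
    · rw [genBinom_eq_zero_of_lt hnk (.inl hn), genBinom, if_neg (by omega), if_neg (by omega),
        if_neg (by omega)]
  · rw [genBinom, genBinom, if_neg (by omega), if_neg (by omega), if_pos ⟨by omega, hn⟩,
      if_neg (by omega), if_pos ⟨hn, hk⟩, sub_sub_cancel, show -(n - k) - 1 = k - n - 1 by ring,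
      Nat.choose_symm_of_eq_add (a := (-n - 1).toNat) (b := k.toNat) (by omega)]

theorem genBinom_symm (n k : ℤ) : genBinom n (n - k) = genBinom n k := by
  rcases le_or_gt 0 k with hk | hk
  · exact genBinom_sub_of_nonneg n hk
  rcases le_or_gt k n with hkn | hnk
  · simpa using (genBinom_sub_of_nonneg n (k := n - k) (by omega)).symm
  · rw [genBinom_eq_zero_of_lt hnk (.inr hk), genBinom_eq_zero_of_lt (by omega) (.inr (by omega))]

theorem genBinom_lucas_of_nonneg {p : ℕ} [Fact p.Prime] (n : ℤ) {k : ℤ} (hk : 0 ≤ k) :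
    genBinom n k ≡ genBinom (n % p) (k % p) * genBinom (n / p) (k / p) [ZMOD p] := by
  lift k to ℕ using hk
  rw [← Int.natCast_emod, ← Int.natCast_ediv]
  simp only [genBinom_natCast]
  exact Int.choose_modEq_choose_mod_mul_choose_div n k

theorem genBinom_lucas_of_sub {p : ℕ} (hp : (0 : ℤ) < p) {n k : ℤ}
    (h : genBinom n (n - k) ≡
      genBinom (n % p) ((n - k) % p) * genBinom (n / p) ((n - k) / p) [ZMOD p]) :
    genBinom n k ≡ genBinom (n % p) (k % p) * genBinom (n / p) (k / p) [ZMOD p] := by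
  have hn_digits := Int.emod_add_mul_ediv n p
  have hk_digits := Int.emod_add_mul_ediv k p
  have hn₀ := Int.emod_nonneg n hp.ne'
  have hn₀_lt := Int.emod_lt_of_pos n hp
  have hk₀ := Int.emod_nonneg k hp.ne'
  have hk₀_lt := Int.emod_lt_of_pos k hp
  rcases le_or_gt (k % p) (n % p) with hle | hlt
  · obtain ⟨hq, hr⟩ := (Int.ediv_emod_unique hp (a := n - k) (r := n % p - k % p)
      (q := n / p - k / p)).mpr
      ⟨by linear_combination hn_digits - hk_digits, by omega, by omega⟩
    simpa only [hq, hr, genBinom_symm] using h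
  · obtain ⟨-, hr⟩ := (Int.ediv_emod_unique hp (a := n - k) (r := n % p - k % p + p)
      (q := n / p - k / p - 1)).mpr
      ⟨by linear_combination hn_digits - hk_digits, by omega, by omega⟩
    rw [hr, genBinom_eq_zero_of_lt (n := n % p) (by omega) (.inl hn₀), zero_mul,
      genBinom_symm] at h
    rwa [genBinom_eq_zero_of_lt hlt (.inl hn₀), zero_mul]

theorem genBinom_lucas_of_lt_of_neg {p : ℕ} (hp : (0 : ℤ) < p) {n k : ℤ} (hnk : n < k)
    (hk : k < 0) :
    genBinom n k ≡ genBinom (n % p) (k % p) * genBinom (n / p) (k / p) [ZMOD p] := by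
  rw [genBinom_eq_zero_of_lt hnk (.inr hk)]
  rcases (Int.ediv_le_ediv hp hnk.le).lt_or_eq with hlt | heq
  · rw [genBinom_eq_zero_of_lt hlt (.inr (Int.ediv_neg_of_neg_of_pos hk hp)), mul_zero]
  · have hn_digits := Int.emod_add_mul_ediv n p
    have hk_digits := Int.emod_add_mul_ediv k p
    have hlt : n % p < k % p := by rw [heq] at hn_digits; linarith
    rw [genBinom_eq_zero_of_lt hlt (.inl (Int.emod_nonneg n hp.ne')), zero_mul]

theorem genBinom_lucas (p : ℕ) (hp : p.Prime) (n k : ℤ) :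
    genBinom n k ≡ genBinom (n % p) (k % p) * genBinom (n / p) (k / p) [ZMOD p] := by
  have := Fact.mk hp
  have hp₀ : (0 : ℤ) < p := by exact_mod_cast hp.pos
  rcases le_or_gt 0 k with hk | hk
  · exact genBinom_lucas_of_nonneg n hk
  rcases le_or_gt k n with hkn | hnk
  · exact genBinom_lucas_of_sub hp₀ (genBinom_lucas_of_nonneg n (by omega))
  · exact genBinom_lucas_of_lt_of_neg hp₀ hnk hk
end

section
/- For all integers n and k with (n,k) ≠ (0,0), the generalized q-binomial coefficient satisfies the second q-Pascal rule qbinom(n,k) = q^{n-k} · qbinom(n-1,k-1) + qbinom(n-1,k). -/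
open LaurentPolynomial in
/-- The ordinary Gaussian binomial coefficient as a (Laurent) polynomial in `q = T 1`,
defined by the `q`-Pascal rule; it is `0` when the lower entry exceeds the upper one. -/
noncomputable def gauss : ℕ → ℕ → LaurentPolynomial ℤ
  | _, 0 => 1
  | 0, _ + 1 => 0
  | a + 1, b + 1 => gauss a b + T ((b : ℤ) + 1) * gauss a (b + 1)

open LaurentPolynomial in
/-- The generalized `q`-binomial coefficient, a Laurent polynomial in `q = T 1`,
extended to arbitrary integer entries. -/
noncomputable def qbinom (n k : ℤ) : LaurentPolynomial ℤ :=
  if 0 ≤ k ∧ k ≤ n then gauss n.toNat k.toNat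
  else if n < 0 ∧ 0 ≤ k then
    (-1) ^ k.toNat * T (k * (2 * n - k + 1) / 2) * gauss (k - n - 1).toNat k.toNat
  else if k ≤ n ∧ n < 0 then
    (-1) ^ (n - k).toNat * T ((n * (n + 1) - k * (k + 1)) / 2) *
      gauss (-k - 1).toNat (-n - 1).toNat
  else 0

/-!
Where `qbinom` is given by a formula it is a signed power of `q` times a Gaussian coefficient:
at `(-a-1, b)` it is `(-1)^b q^(-(a+1)b - C(b,2)) [a+b, b]`, and at `(-j-1, -i-1)` it is
`(-1)^(i-j) q^(C(j+1,2) - C(i+1,2)) [i, j]`, both for all `a, b, i, j ≥ 0`. For `n, k > 0` the rule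
is the second `q`-Pascal rule for `gauss`; for `n ≤ 0 < k` and for `n, k < 0` it is the first one,
the recursion defining `gauss`, the powers of `q` matching because `C(m+1,2) = C(m,2) + m`.
-/

lemma Nat.two_mul_cast_choose_two {R : Type*} [CommRing R] (a : ℕ) :
    2 * (a.choose 2 : R) = a * (a - 1) := by
  induction a with
  | zero => simp
  | succ a ih => rw [Nat.choose_succ_succ, Nat.choose_one_right]; push_cast; linear_combination ih

lemma Nat.cast_choose_two_succ {R : Type*} [AddMonoidWithOne R] (a : ℕ) :
    ((a + 1).choose 2 : R) = a + a.choose 2 := by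
  rw [Nat.choose_succ_succ, Nat.choose_one_right, Nat.cast_add]

open LaurentPolynomial

@[simp] lemma gauss_zero_right (a : ℕ) : gauss a 0 = 1 := by cases a <;> rfl

lemma gauss_succ_succ (a b : ℕ) :
    gauss (a + 1) (b + 1) = gauss a b + T (b + 1) * gauss a (b + 1) := rfl

lemma gauss_eq_zero_of_lt : ∀ {a b : ℕ}, a < b → gauss a b = 0
  | 0, _ + 1, _ => rfl
  | a + 1, b + 1, h => by
    rw [gauss_succ_succ, gauss_eq_zero_of_lt (by omega : a < b),
      gauss_eq_zero_of_lt (by omega : a < b + 1), mul_zero, add_zero]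

lemma gauss_succ_succ' : ∀ a b : ℕ,
    gauss (a + 1) (b + 1) = T (a - b) * gauss a b + gauss a (b + 1)
  | 0, 0 => by rw [gauss_succ_succ]; simp [gauss_eq_zero_of_lt]
  | 0, b + 1 => by simp [gauss_succ_succ, gauss_eq_zero_of_lt]
  | a + 1, 0 => by
    have hT : T 1 * T a = (T (a + 1) : LaurentPolynomial ℤ) := by rw [← T_add, add_comm]
    calc gauss (a + 2) 1 = 1 + T 1 * gauss (a + 1) 1 := by simp [gauss_succ_succ]
      _ = 1 + T 1 * (T a + gauss a 1) := by rw [gauss_succ_succ' a 0]; simp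
      _ = T (a + 1) + (1 + T 1 * gauss a 1) := by rw [← hT]; ring
      _ = _ := by simp [gauss_succ_succ]
  | a + 1, b + 1 => by
    have hT : T (b + 2) * T (a - b - 1) = (T (a - b) * T (b + 1) : LaurentPolynomial ℤ) := by
      simp only [← T_add]; ring_nf
    calc gauss (a + 2) (b + 2)
        = gauss (a + 1) (b + 1) + T (b + 2) * gauss (a + 1) (b + 2) := by
          rw [gauss_succ_succ]; push_cast; ring_nf
      _ = (T (a - b) * gauss a b + gauss a (b + 1)) +
            T (b + 2) * (T (a - b - 1) * gauss a (b + 1) + gauss a (b + 2)) := by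
          rw [gauss_succ_succ' a b, gauss_succ_succ' a (b + 1)]; push_cast; ring_nf
      _ = T (a - b) * (gauss a b + T (b + 1) * gauss a (b + 1)) +
            (gauss a (b + 1) + T (b + 2) * gauss a (b + 2)) := by
          linear_combination gauss a (b + 1) * hT
      _ = _ := by rw [gauss_succ_succ a b, gauss_succ_succ a (b + 1)]; push_cast; ring_nf

lemma qbinom_natCast (a b : ℕ) : qbinom a b = gauss a b := by
  rcases le_or_gt b a with h | h
  · simp [qbinom, h]
  · rw [qbinom, if_neg (by omega), if_neg (by omega), if_neg (by omega), gauss_eq_zero_of_lt h]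

lemma qbinom_of_nonneg_of_neg {n k : ℤ} (hn : 0 ≤ n) (hk : k < 0) : qbinom n k = 0 := by
  rw [qbinom, if_neg (by omega), if_neg (by omega), if_neg (by omega)]

lemma qbinom_of_lt_of_neg {n k : ℤ} (hnk : n < k) (hk : k < 0) : qbinom n k = 0 := by
  rw [qbinom, if_neg (by omega), if_neg (by omega), if_neg (by omega)]

lemma qbinom_neg_sub_one_natCast (a b : ℕ) :
    qbinom (-a - 1) b = (-1) ^ b * T (-((a + 1) * b + b.choose 2)) * gauss (a + b) b := by
  have hexp : b * (2 * (-a - 1 : ℤ) - b + 1) / 2 = -((a + 1) * b + b.choose 2) :=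
    Int.ediv_eq_of_eq_mul_left two_ne_zero (by linear_combination b.two_mul_cast_choose_two (R := ℤ))
  rw [qbinom, if_neg (by omega), if_pos ⟨by omega, by omega⟩, hexp, Int.toNat_natCast,
    show (b - (-a - 1 : ℤ) - 1).toNat = a + b by omega]

lemma qbinom_neg_natCast_add_one (a b : ℕ) :
    qbinom (-a) (b + 1) =
      (-1) ^ (b + 1) * T (-(a * (b + 1) + (b + 1).choose 2)) * gauss (a + b) (b + 1) := by
  cases a with
  | zero => simpa [gauss_eq_zero_of_lt] using qbinom_natCast 0 (b + 1)
  | succ a =>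
    have h := qbinom_neg_sub_one_natCast a (b + 1)
    push_cast at h ⊢
    rw [neg_add', h, add_right_comm a 1 b, add_assoc a]

lemma qbinom_neg_sub_one_neg_sub_one (i j : ℕ) :
    qbinom (-j - 1) (-i - 1) =
      (-1) ^ (i - j) * T ((j + 1).choose 2 - (i + 1).choose 2) * gauss i j := by
  rcases le_or_gt j i with hji | hij
  · have hexp : ((-j - 1 : ℤ) * (-j - 1 + 1) - (-i - 1 : ℤ) * (-i - 1 + 1)) / 2 =
        (j + 1).choose 2 - (i + 1).choose 2 := by
      refine Int.ediv_eq_of_eq_mul_left two_ne_zero ?_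
      have hj := (j + 1).two_mul_cast_choose_two (R := ℤ)
      have hi := (i + 1).two_mul_cast_choose_two (R := ℤ)
      push_cast at hi hj
      linear_combination hi - hj
    rw [qbinom, if_neg (by omega), if_neg (by omega), if_pos ⟨by omega, by omega⟩, hexp,
      show (-j - 1 - (-i - 1) : ℤ).toNat = i - j by omega,
      show (-(-i - 1 : ℤ) - 1).toNat = i by omega, show (-(-j - 1 : ℤ) - 1).toNat = j by omega]
  · rw [gauss_eq_zero_of_lt hij, mul_zero, qbinom_of_lt_of_neg (by omega) (by omega)]

@[simp] lemma qbinom_zero_right (n : ℤ) : qbinom n 0 = 1 := by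
  rcases le_or_gt 0 n with hn | hn
  · lift n to ℕ using hn
    simpa using qbinom_natCast n 0
  · obtain ⟨a, rfl⟩ : ∃ a : ℕ, n = -a - 1 := ⟨(-n - 1).toNat, by omega⟩
    simpa using qbinom_neg_sub_one_natCast a 0

lemma qbinom_pascal'_of_pos {n k : ℤ} (hn : 0 < n) (hk : 0 < k) :
    qbinom n k = T (n - k) * qbinom (n - 1) (k - 1) + qbinom (n - 1) k := by
  obtain ⟨a, rfl⟩ : ∃ a : ℕ, n = a + 1 := ⟨(n - 1).toNat, by omega⟩
  obtain ⟨b, rfl⟩ : ∃ b : ℕ, k = b + 1 := ⟨(k - 1).toNat, by omega⟩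
  have h := gauss_succ_succ' a b
  simp only [← qbinom_natCast, Nat.cast_add, Nat.cast_one] at h
  rw [h, add_sub_add_right_eq_sub, add_sub_cancel_right, add_sub_cancel_right]

lemma qbinom_pascal'_zero_right {n : ℤ} (hn : n ≠ 0) :
    qbinom n 0 = T (n - 0) * qbinom (n - 1) (0 - 1) + qbinom (n - 1) 0 := by
  have h : qbinom (n - 1) (0 - 1) = 0 := by
    rcases hn.lt_or_gt with hneg | hpos
    · exact qbinom_of_lt_of_neg (by omega) (by omega)
    · exact qbinom_of_nonneg_of_neg (by omega) (by omega)
  rw [h, qbinom_zero_right, qbinom_zero_right, mul_zero, zero_add]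

lemma qbinom_pascal'_of_pos_of_neg {n k : ℤ} (hn : 0 < n) (hk : k < 0) :
    qbinom n k = T (n - k) * qbinom (n - 1) (k - 1) + qbinom (n - 1) k := by
  rw [qbinom_of_nonneg_of_neg hn.le hk, qbinom_of_nonneg_of_neg (by omega) (by omega),
    qbinom_of_nonneg_of_neg (by omega) hk, mul_zero, add_zero]

lemma qbinom_pascal'_of_nonpos_of_pos {n k : ℤ} (hn : n ≤ 0) (hk : 0 < k) :
    qbinom n k = T (n - k) * qbinom (n - 1) (k - 1) + qbinom (n - 1) k := by
  obtain ⟨a, rfl⟩ : ∃ a : ℕ, n = -a := ⟨(-n).toNat, by omega⟩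
  obtain ⟨b, rfl⟩ : ∃ b : ℕ, k = b + 1 := ⟨(k - 1).toNat, by omega⟩
  have h₁ : T (-a - (b + 1)) * T (-((a + 1) * b + b.choose 2)) =
      (T (-((a + 1) * (b + 1) + (b + 1).choose 2)) : LaurentPolynomial ℤ) := by
    rw [← T_add, Nat.cast_choose_two_succ]; ring_nf
  have h₂ : T (-((a + 1) * (b + 1) + (b + 1).choose 2)) * T (b + 1) =
      (T (-(a * (b + 1) + (b + 1).choose 2)) : LaurentPolynomial ℤ) := by
    rw [← T_add]; ring_nf
  have h₃ := qbinom_neg_natCast_add_one (a + 1) b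
  push_cast at h₃
  rw [neg_add'] at h₃
  rw [add_sub_cancel_right, qbinom_neg_natCast_add_one, qbinom_neg_sub_one_natCast, h₃,
    add_right_comm a 1 b, gauss_succ_succ]
  linear_combination (-1) ^ b * (gauss (a + b) (b + 1) * h₂ - gauss (a + b) b * h₁)

lemma qbinom_pascal'_of_neg_of_neg {n k : ℤ} (hn : n < 0) (hk : k < 0) :
    qbinom n k = T (n - k) * qbinom (n - 1) (k - 1) + qbinom (n - 1) k := by
  obtain ⟨j, rfl⟩ : ∃ j : ℕ, n = -j - 1 := ⟨(-n - 1).toNat, by omega⟩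
  obtain ⟨i, rfl⟩ : ∃ i : ℕ, k = -i - 1 := ⟨(-k - 1).toNat, by omega⟩
  -- for `i ≤ j` the exponent `i - (j + 1)` truncates, but then `gauss i (j + 1) = 0`
  have hsign : (-1) ^ (i - (j + 1)) * gauss i (j + 1) = -((-1) ^ (i - j) * gauss i (j + 1)) := by
    rcases lt_or_ge j i with hji | hij
    · rw [show i - j = i - (j + 1) + 1 by omega, pow_succ]; ring
    · simp [gauss_eq_zero_of_lt (Nat.lt_succ_of_le hij)]
  have h₁ : T (-j - 1 - (-i - 1)) * T ((j + 1 + 1).choose 2 - (i + 1 + 1).choose 2) =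
      (T ((j + 1).choose 2 - (i + 1).choose 2) : LaurentPolynomial ℤ) := by
    rw [← T_add, Nat.cast_choose_two_succ (j + 1), Nat.cast_choose_two_succ (i + 1)]
    congr 1; push_cast; ring
  have h₂ : T ((j + 1).choose 2 - (i + 1).choose 2) * T (j + 1) =
      (T ((j + 1 + 1).choose 2 - (i + 1).choose 2) : LaurentPolynomial ℤ) := by
    rw [← T_add, Nat.cast_choose_two_succ (j + 1)]
    congr 1; push_cast; ring
  rw [show -(j : ℤ) - 1 - 1 = -((j + 1 : ℕ) : ℤ) - 1 by push_cast; ring,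
    show -(i : ℤ) - 1 - 1 = -((i + 1 : ℕ) : ℤ) - 1 by push_cast; ring,
    qbinom_neg_sub_one_neg_sub_one, qbinom_neg_sub_one_neg_sub_one,
    qbinom_neg_sub_one_neg_sub_one, Nat.add_sub_add_right, gauss_succ_succ]
  linear_combination -(-1) ^ (i - j) * ((gauss i j + T (j + 1) * gauss i (j + 1)) * h₁ +
    gauss i (j + 1) * h₂) - T ((j + 1 + 1).choose 2 - (i + 1).choose 2) * hsign

lemma qbinom_pascal'_zero_left_of_neg {k : ℤ} (hk : k < 0) :
    qbinom 0 k = T (0 - k) * qbinom (0 - 1) (k - 1) + qbinom (0 - 1) k := by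
  obtain ⟨i, rfl⟩ : ∃ i : ℕ, k = -i - 1 := ⟨(-k - 1).toNat, by omega⟩
  have h : T (i + 1) * T (-((i + 1 + 1).choose 2)) =
      (T (-((i + 1).choose 2)) : LaurentPolynomial ℤ) := by
    rw [← T_add, Nat.cast_choose_two_succ (i + 1)]
    congr 1; push_cast; ring
  rw [qbinom_of_nonneg_of_neg le_rfl hk, show (0 : ℤ) - (-i - 1) = i + 1 by ring,
    show (0 : ℤ) - 1 = -((0 : ℕ) : ℤ) - 1 by simp,
    show -(i : ℤ) - 1 - 1 = -((i + 1 : ℕ) : ℤ) - 1 by push_cast; ring,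
    qbinom_neg_sub_one_neg_sub_one, qbinom_neg_sub_one_neg_sub_one]
  simp only [Nat.sub_zero, gauss_zero_right, zero_add, Nat.choose_eq_zero_of_lt one_lt_two,
    Nat.cast_zero, zero_sub]
  linear_combination (-1) ^ i * h

open LaurentPolynomial in
theorem qbinom_pascal' (n k : ℤ) (h : (n, k) ≠ (0, 0)) :
    qbinom n k = T (n - k) * qbinom (n - 1) (k - 1) + qbinom (n - 1) k := by
  rcases lt_trichotomy k 0 with hk | rfl | hk
  · rcases lt_trichotomy n 0 with hn | rfl | hn
    · exact qbinom_pascal'_of_neg_of_neg hn hk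
    · exact qbinom_pascal'_zero_left_of_neg hk
    · exact qbinom_pascal'_of_pos_of_neg hn hk
  · exact qbinom_pascal'_zero_right fun hn => h (by rw [hn])
  · rcases lt_or_ge 0 n with hn | hn
    · exact qbinom_pascal'_of_pos hn hk
    · exact qbinom_pascal'_of_nonpos_of_pos hn hk
end

section
/- Define A(n) = ∑_{k ∈ ℤ} C(n,k)² · C(n+k,k)² for all integers n, where C is Loeb's generalized binomial coefficient (the sum has finitely many nonzero terms). Then A(-n) = A(n-1) for every integer n. -/
/-- The Apéry numbers, extended to all integers via Loeb's generalized binomial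
coefficients: `A n = ∑_{k ∈ ℤ} C(n,k)² C(n+k,k)²` (a finitely supported sum). -/
noncomputable def aperyExt (n : ℤ) : ℤ :=
  ∑ᶠ k : ℤ, (genBinom n k) ^ 2 * (genBinom (n + k) k) ^ 2

/-! For `k ≥ 0` the reflection rule `C(n,k) = (-1)^k C(k-n-1,k)` sends the two factors
`C(-n,k)`, `C(-n+k,k)` of the `k`-th term of `A(-n)` to `C(n+k-1,k)`, `C(n-1,k)` up to sign,
which are the two factors of the `k`-th term of `A(n-1)`. For `k < 0` both terms vanish. -/

lemma genBinom_natCast_of_le (n : ℕ) {k : ℕ} (hk : k ≤ n) : genBinom n k = n.choose k := by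
  simp [genBinom, hk]

lemma genBinom_natCast_of_lt (n : ℕ) {k : ℕ} (hk : n < k) : genBinom n k = 0 := by
  simp [genBinom, hk.not_ge]

lemma genBinom_negSucc (m k : ℕ) :
    genBinom (Int.negSucc m) k = (-1) ^ k * (k + m).choose k := by
  have hkm : ((k : ℤ) - Int.negSucc m - 1).toNat = k + m := by omega
  simp [genBinom, hkm, (Int.negSucc_lt_zero m).trans_le]

lemma genBinom_eq_zero_of_neg {n k : ℤ} (hk : k < 0) (hn : n < k ∨ 0 ≤ n) :
    genBinom n k = 0 := by
  simp only [genBinom]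
  split_ifs <;> omega

theorem genBinom_reflect (n : ℤ) (k : ℕ) : genBinom n k = (-1) ^ k * genBinom (k - n - 1) k := by
  rcases n with n | m
  · rw [Int.ofNat_eq_natCast]
    rcases le_or_gt k n with hkn | hnk
    · obtain ⟨d, rfl⟩ := Nat.exists_eq_add_of_le hkn
      have : (k : ℤ) - (k + d : ℕ) - 1 = Int.negSucc d := by omega
      rw [this, genBinom_negSucc, genBinom_natCast_of_le _ hkn, ← mul_assoc, ← pow_add,
        Even.neg_one_pow ⟨k, rfl⟩, one_mul]
    · have : (k : ℤ) - n - 1 = (k - n - 1 : ℕ) := by omega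
      rw [this, genBinom_natCast_of_lt _ hnk, genBinom_natCast_of_lt _ (by omega), mul_zero]
  · have : (k : ℤ) - Int.negSucc m - 1 = (k + m : ℕ) := by omega
    rw [this, genBinom_negSucc, genBinom_natCast_of_le _ (Nat.le_add_right k m)]

lemma genBinom_sq_reflect (n : ℤ) (k : ℕ) : genBinom n k ^ 2 = genBinom (k - n - 1) k ^ 2 := by
  rw [genBinom_reflect, mul_pow, ← pow_mul, pow_mul', neg_one_sq, one_pow, one_mul]

lemma genBinom_mul_genBinom_add_of_neg (n : ℤ) {k : ℤ} (hk : k < 0) :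
    genBinom n k * genBinom (n + k) k = 0 := by
  rcases lt_or_ge n 0 with hn | hn
  · rw [genBinom_eq_zero_of_neg (n := n + k) hk (.inl (by omega)), mul_zero]
  · rw [genBinom_eq_zero_of_neg hk (.inr hn), zero_mul]

theorem aperyExt_reflection (n : ℤ) : aperyExt (-n) = aperyExt (n - 1) := by
  unfold aperyExt
  refine finsum_congr fun k => ?_
  rcases lt_or_ge k 0 with hk | hk
  · simp only [← mul_pow, genBinom_mul_genBinom_add_of_neg _ hk]
  · lift k to ℕ using hk
    rw [genBinom_sq_reflect (-n), genBinom_sq_reflect (-n + k), mul_comm]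
    congr 3 <;> ring
end
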